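/- arXiv:2109.05499 — 4 statements merged into one kernel-verified Lean document; each statement's English description precedes it below -/
import Mathlib

section
/- In any category base (X, C), if the intersection A ∩ B of two regions A and B does not contain a region, then A ∩ B is a singular set. -/
/-!
Let `E` be a region. If `E ∩ A` contains no region, axiom (2)(ii) for the family `{A}` gives a
subregion of `E` missing `A`. Otherwise pick a region `G ⊆ E ∩ A`; then `G ∩ B ⊆ A ∩ B` contains
no region, and (2)(ii) for `{B}` gives a subregion of `G` missing `B`. The size condition
`#{A} < #regions` holds because `A ≠ B`.
-/

structure CatBase (X : Type*) where
  regions : Set (Set X)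
  nonempty_X : Nonempty X
  cover : ∀ x : X, ∃ A ∈ regions, x ∈ A
  ax2 : ∀ A ∈ regions, ∀ D : Set (Set X), D ⊆ regions → D.Nonempty →
    D.Pairwise Disjoint → Cardinal.mk D < Cardinal.mk regions →
    ((∃ B ∈ regions, B ⊆ A ∩ ⋃₀ D) → ∃ C ∈ D, ∃ B ∈ regions, B ⊆ A ∩ C) ∧
    (¬ (∃ B ∈ regions, B ⊆ A ∩ ⋃₀ D) →
      ∃ B ∈ regions, B ⊆ A ∧ ∀ C ∈ D, Disjoint B C)

namespace CatBase

variable {X : Type*}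

/-- A set is singular if every region contains a subregion disjoint from it. -/
def Singular (cb : CatBase X) (S : Set X) : Prop :=
  ∀ A ∈ cb.regions, ∃ B ∈ cb.regions, B ⊆ A ∧ Disjoint B S

/-- A set is meager if it is a countable union of singular sets. -/
def Meager (cb : CatBase X) (S : Set X) : Prop :=
  ∃ f : ℕ → Set X, (∀ n, cb.Singular (f n)) ∧ S = ⋃ n, f n

def Abundant (cb : CatBase X) (S : Set X) : Prop := ¬ cb.Meager S

/-- A set is Baire if every region has a subregion in which the set or its complement is meager. -/
def Baire (cb : CatBase X) (S : Set X) : Prop :=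
  ∀ A ∈ cb.regions, ∃ B ∈ cb.regions, B ⊆ A ∧
    (cb.Meager (S ∩ B) ∨ cb.Meager (Sᶜ ∩ B))

theorem one_lt_mk_regions (cb : CatBase X) {A B : Set X} (hA : A ∈ cb.regions)
    (hB : B ∈ cb.regions) (hAB : A ≠ B) : 1 < Cardinal.mk cb.regions :=
  Cardinal.one_lt_iff_nontrivial.mpr ⟨⟨A, hA⟩, ⟨B, hB⟩, Subtype.coe_ne_coe.mp hAB⟩

theorem exists_subregion_disjoint (cb : CatBase X) {A E : Set X}
    (hregions : 1 < Cardinal.mk cb.regions) (hA : A ∈ cb.regions) (hE : E ∈ cb.regions)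
    (h : ¬ ∃ G ∈ cb.regions, G ⊆ E ∩ A) :
    ∃ F ∈ cb.regions, F ⊆ E ∧ Disjoint F A := by
  have hcard : Cardinal.mk ({A} : Set (Set X)) < Cardinal.mk cb.regions := by
    rwa [Cardinal.mk_singleton]
  obtain ⟨F, hF, hFE, hFA⟩ := (cb.ax2 E hE {A} (Set.singleton_subset_iff.mpr hA)
    (Set.singleton_nonempty A) (Set.pairwise_singleton _ _) hcard).2
    (by rwa [Set.sUnion_singleton])
  exact ⟨F, hF, hFE, hFA A rfl⟩

end CatBase

theorem stmt0 {X : Type*} (cb : CatBase X) {A B : Set X}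
    (hA : A ∈ cb.regions) (hB : B ∈ cb.regions)
    (h : ¬ ∃ C ∈ cb.regions, C ⊆ A ∩ B) :
    cb.Singular (A ∩ B) := by
  have hAB : A ≠ B := by
    rintro rfl
    exact h ⟨A, hA, by rw [Set.inter_self]⟩
  have hregions := cb.one_lt_mk_regions hA hB hAB
  intro E hE
  by_cases hEA : ∃ G ∈ cb.regions, G ⊆ E ∩ A
  · obtain ⟨G, hG, hGEA⟩ := hEA
    have hGB : ¬ ∃ F ∈ cb.regions, F ⊆ G ∩ B := fun ⟨F, hF, hFGB⟩ =>
      h ⟨F, hF, Set.inter_subset_inter_left B (hGEA.trans Set.inter_subset_right) |>.trans' hFGB⟩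
    obtain ⟨F, hF, hFG, hFB⟩ := cb.exists_subregion_disjoint hregions hB hG hGB
    exact ⟨F, hF, hFG.trans (hGEA.trans Set.inter_subset_left),
      hFB.mono_right Set.inter_subset_right⟩
  · obtain ⟨F, hF, hFE, hFA⟩ := cb.exists_subregion_disjoint hregions hA hE hEA
    exact ⟨F, hF, hFE, hFA.mono_right Set.inter_subset_left⟩
end

section
/- (The Fundamental Theorem) In any category base, every abundant set is abundant everywhere in some region: if A is abundant, then there exists a region C such that A is abundant in every subregion of C (i.e., for every region D ⊆ C, A ∩ D is abundant). -/
/-!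
If no region `C` has the property, every region has a subregion `D` with `A ∩ D` meager.
Enumerating the regions in order type `#regions` and greedily picking, below the `i`-th region,
such a `D` disjoint from all earlier picks, one gets a disjoint family `𝒟` of regions with every
`A ∩ D` meager. The second axiom of a category base applies at each stage, since fewer than
`#regions` regions have been picked so far, and shows that `𝒟` is dense: every region has a
subregion inside some member of `𝒟`. For a dense disjoint family, the `n`-th singular pieces of
all the `A ∩ D` together still form a singular set, and `A \ ⋃₀ 𝒟` is singular; so `A` is meager.
-/

open Cardinal Set

universe u

namespace CatBase

variable {X : Type u} (cb : CatBase X)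

def IsDenseFamily (𝒟 : Set (Set X)) : Prop :=
  ∀ C ∈ cb.regions, ∃ B ∈ cb.regions, B ⊆ C ∧ ∃ D ∈ 𝒟, B ⊆ D

variable {cb}

theorem Singular.mono {S T : Set X} (hT : cb.Singular T) (hST : S ⊆ T) : cb.Singular S :=
  fun C hC ↦ (hT C hC).imp fun _ ⟨hB, hBC, hBT⟩ ↦ ⟨hB, hBC, hBT.mono_right hST⟩

theorem Singular.union {S T : Set X} (hS : cb.Singular S) (hT : cb.Singular T) :
    cb.Singular (S ∪ T) := by
  intro C hC
  obtain ⟨B, hB, hBC, hBS⟩ := hS C hC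
  obtain ⟨B', hB', hB'B, hB'T⟩ := hT B hB
  exact ⟨B', hB', hB'B.trans hBC, disjoint_union_right.2 ⟨hBS.mono_left hB'B, hB'T⟩⟩

theorem meager_of_subset_iUnion {S : Set X} (f : ℕ → Set X) (hf : ∀ n, cb.Singular (f n))
    (hS : S ⊆ ⋃ n, f n) : cb.Meager S :=
  ⟨fun n ↦ f n ∩ S, fun n ↦ (hf n).mono inter_subset_left, by
    rw [← iUnion_inter, inter_eq_right.2 hS]⟩

theorem IsDenseFamily.singular_compl_sUnion {𝒟 : Set (Set X)} (h𝒟 : cb.IsDenseFamily 𝒟) :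
    cb.Singular (⋃₀ 𝒟)ᶜ := by
  intro C hC
  obtain ⟨B, hB, hBC, D, hD, hBD⟩ := h𝒟 C hC
  exact ⟨B, hB, hBC, disjoint_compl_right_iff_subset.2 (hBD.trans (subset_sUnion_of_mem hD))⟩

theorem IsDenseFamily.singular_biUnion {𝒟 : Set (Set X)} (h𝒟 : cb.IsDenseFamily 𝒟)
    (hdisj : 𝒟.Pairwise Disjoint) {g : Set X → Set X} (hgD : ∀ D ∈ 𝒟, g D ⊆ D)
    (hg : ∀ D ∈ 𝒟, cb.Singular (g D)) : cb.Singular (⋃ D ∈ 𝒟, g D) := by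
  intro C hC
  obtain ⟨B, hB, hBC, D₀, hD₀, hBD₀⟩ := h𝒟 C hC
  obtain ⟨B', hB', hB'B, hB'g⟩ := hg D₀ hD₀ B hB
  refine ⟨B', hB', hB'B.trans hBC, disjoint_iUnion₂_right.2 fun D hD ↦ ?_⟩
  obtain rfl | hne := eq_or_ne D₀ D
  · exact hB'g
  · exact (hdisj hD₀ hD hne).mono (hB'B.trans hBD₀) (hgD D hD)

theorem IsDenseFamily.meager {𝒟 : Set (Set X)} (h𝒟 : cb.IsDenseFamily 𝒟)
    (hdisj : 𝒟.Pairwise Disjoint) {S : Set X} (hS : ∀ D ∈ 𝒟, cb.Meager (S ∩ D)) :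
    cb.Meager S := by
  choose! f hf hSf using hS
  refine meager_of_subset_iUnion (fun n ↦ (⋃₀ 𝒟)ᶜ ∪ ⋃ D ∈ 𝒟, f D n ∩ D)
    (fun n ↦ h𝒟.singular_compl_sUnion.union <| h𝒟.singular_biUnion hdisj
      (fun _ _ ↦ inter_subset_right) fun D hD ↦ (hf D hD n).mono inter_subset_left) ?_
  intro x hx
  by_cases hxU : x ∈ ⋃₀ 𝒟
  · obtain ⟨D, hD, hxD⟩ := hxU
    obtain ⟨n, hn⟩ := mem_iUnion.1 (hSf D hD ▸ ⟨hx, hxD⟩ : x ∈ ⋃ n, f D n)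
    exact mem_iUnion.2 ⟨n, Or.inr (mem_iUnion₂.2 ⟨D, hD, hn, hxD⟩)⟩
  · exact mem_iUnion.2 ⟨0, Or.inl hxU⟩

variable (cb)

theorem exists_subregion_subset_mem_or_disjoint {A : Set X} (hA : A ∈ cb.regions)
    {𝒟 : Set (Set X)} (h𝒟 : 𝒟 ⊆ cb.regions) (hdisj : 𝒟.Pairwise Disjoint)
    (hcard : #𝒟 < #cb.regions) :
    (∃ B ∈ cb.regions, B ⊆ A ∧ ∃ D ∈ 𝒟, B ⊆ D) ∨
      ∃ B ∈ cb.regions, B ⊆ A ∧ ∀ D ∈ 𝒟, Disjoint B D := by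
  obtain rfl | hne := 𝒟.eq_empty_or_nonempty
  · exact Or.inr ⟨A, hA, subset_rfl, by simp⟩
  obtain ⟨hcovered, hdisjoint⟩ := cb.ax2 A hA 𝒟 h𝒟 hne hdisj hcard
  by_cases h : ∃ B ∈ cb.regions, B ⊆ A ∩ ⋃₀ 𝒟
  · obtain ⟨D, hD, B, hB, hBAD⟩ := hcovered h
    exact Or.inl ⟨B, hB, hBAD.trans inter_subset_left, D, hD, hBAD.trans inter_subset_right⟩
  · exact Or.inr (hdisjoint h)

section Greedy

variable (Q : Set X → Prop) {ι : Type u} [LinearOrder ι] [WellFoundedLT ι] (e : ι → Set X)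

open Classical in
noncomputable def greedyStep (C : Set X) (𝒟 : Set (Set X)) : Option (Set X) :=
  if h : ∃ D ∈ cb.regions, D ⊆ C ∧ Q D ∧ ∀ S ∈ 𝒟, Disjoint D S then some h.choose else none

noncomputable def greedyChoice : ι → Option (Set X) :=
  WellFoundedLT.fix fun i prev ↦ cb.greedyStep Q (e i) {S | ∃ j, ∃ h : j < i, prev j h = some S}

def chosenBefore (i : ι) : Set (Set X) := {S | ∃ j < i, cb.greedyChoice Q e j = some S}

def chosen : Set (Set X) := {S | ∃ i, cb.greedyChoice Q e i = some S}

variable {cb Q e}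

theorem greedyChoice_eq (i : ι) :
    cb.greedyChoice Q e i = cb.greedyStep Q (e i) (cb.chosenBefore Q e i) := by
  rw [greedyChoice, WellFoundedLT.fix_eq]
  simp only [chosenBefore, exists_prop]
  rfl

theorem greedyChoice_eq_some {i : ι} {D : Set X} (h : cb.greedyChoice Q e i = some D) :
    D ∈ cb.regions ∧ D ⊆ e i ∧ Q D ∧ ∀ S ∈ cb.chosenBefore Q e i, Disjoint D S := by
  rw [greedyChoice_eq, greedyStep] at h
  split_ifs at h with hex
  exact Option.some_injective _ h ▸ hex.choose_spec

theorem greedyChoice_eq_none {i : ι} (h : cb.greedyChoice Q e i = none) :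
    ¬ ∃ D ∈ cb.regions, D ⊆ e i ∧ Q D ∧ ∀ S ∈ cb.chosenBefore Q e i, Disjoint D S := by
  rw [greedyChoice_eq, greedyStep] at h
  split_ifs at h with hex
  exact hex

theorem chosenBefore_subset_chosen (i : ι) : cb.chosenBefore Q e i ⊆ cb.chosen Q e :=
  fun _ ⟨j, _, hj⟩ ↦ ⟨j, hj⟩

theorem chosen_subset_regions : cb.chosen Q e ⊆ cb.regions :=
  fun _ ⟨_, hi⟩ ↦ (greedyChoice_eq_some hi).1

theorem prop_of_mem_chosen {D : Set X} (hD : D ∈ cb.chosen Q e) : Q D :=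
  let ⟨_, hi⟩ := hD
  (greedyChoice_eq_some hi).2.2.1

theorem pairwise_disjoint_chosen : (cb.chosen Q e).Pairwise Disjoint := by
  have later : ∀ {i j S T}, j < i → cb.greedyChoice Q e i = some S →
      cb.greedyChoice Q e j = some T → Disjoint S T :=
    fun hji hS hT ↦ (greedyChoice_eq_some hS).2.2.2 _ ⟨_, hji, hT⟩
  rintro S ⟨i, hi⟩ T ⟨j, hj⟩ hST
  rcases lt_trichotomy j i with hji | rfl | hij
  · exact later hji hi hj
  · exact absurd (Option.some_injective _ (hi.symm.trans hj)) hST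
  · exact (later hij hj hi).symm

theorem mk_chosenBefore_le (i : ι) : #(cb.chosenBefore Q e i) ≤ #(Iio i) := by
  calc #(cb.chosenBefore Q e i)
      ≤ #((fun j ↦ (cb.greedyChoice Q e j).getD ∅) '' Iio i) :=
        mk_le_mk_of_subset fun S ⟨j, hj, hjS⟩ ↦ ⟨j, hj, by simp [hjS]⟩
    _ ≤ #(Iio i) := mk_image_le

theorem isDenseFamily_chosen (he : ∀ i, e i ∈ cb.regions)
    (he_surj : ∀ C ∈ cb.regions, ∃ i, e i = C) (hcard : ∀ i : ι, #(Iio i) < #cb.regions)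
    (hQ : ∀ C ∈ cb.regions, ∃ D ∈ cb.regions, D ⊆ C ∧ Q D) :
    cb.IsDenseFamily (cb.chosen Q e) := by
  intro C hC
  obtain ⟨i, rfl⟩ := he_surj C hC
  cases hi : cb.greedyChoice Q e i with
  | some D =>
    obtain ⟨hD, hDe, -⟩ := greedyChoice_eq_some hi
    exact ⟨D, hD, hDe, D, ⟨i, hi⟩, subset_rfl⟩
  | none =>
    rcases cb.exists_subregion_subset_mem_or_disjoint (he i)
      ((chosenBefore_subset_chosen i).trans chosen_subset_regions)
      (pairwise_disjoint_chosen.mono (chosenBefore_subset_chosen i))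
      ((mk_chosenBefore_le i).trans_lt (hcard i)) with
      ⟨B, hB, hBe, D, hD, hBD⟩ | ⟨B, hB, hBe, hBdisj⟩
    · exact ⟨B, hB, hBe, D, chosenBefore_subset_chosen i hD, hBD⟩
    · obtain ⟨D, hD, hDB, hQD⟩ := hQ B hB
      exact absurd ⟨D, hD, hDB.trans hBe, hQD, fun S hS ↦ (hBdisj S hS).mono_left hDB⟩
        (greedyChoice_eq_none hi)

end Greedy

theorem exists_pairwise_disjoint_isDenseFamily (Q : Set X → Prop)
    (hQ : ∀ C ∈ cb.regions, ∃ D ∈ cb.regions, D ⊆ C ∧ Q D) :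
    ∃ 𝒟 : Set (Set X), 𝒟.Pairwise Disjoint ∧ (∀ D ∈ 𝒟, Q D) ∧ cb.IsDenseFamily 𝒟 := by
  obtain ⟨enum⟩ : Nonempty ((#cb.regions).ord.ToType ≃ cb.regions) :=
    Cardinal.eq.1 (by rw [mk_toType, card_ord])
  let e i : Set X := enum i
  have hcard (i : (#cb.regions).ord.ToType) : #(Iio i) < #cb.regions := by
    simpa using mk_Iio_lt i
  exact ⟨cb.chosen Q e, pairwise_disjoint_chosen, fun _ ↦ prop_of_mem_chosen,
    isDenseFamily_chosen (fun i ↦ (enum i).2)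
      (fun C hC ↦ ⟨enum.symm ⟨C, hC⟩, by simp [e]⟩) hcard hQ⟩

end CatBase

theorem stmt1 {X : Type*} (cb : CatBase X) {A : Set X}
    (hA : cb.Abundant A) :
    ∃ C ∈ cb.regions, ∀ D ∈ cb.regions, D ⊆ C → cb.Abundant (A ∩ D) := by
  by_contra! hnowhere
  obtain ⟨𝒟, hdisj, hmeager, hdense⟩ :=
    cb.exists_pairwise_disjoint_isDenseFamily (fun D ↦ cb.Meager (A ∩ D)) fun C hC ↦ by
      simpa [CatBase.Abundant] using hnowhere C hC
  exact hA (hdense.meager hdisj hmeager)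
end

section
/- In any M-family, every region is an abundant set; that is, every M-family is a Baire base. -/
structure MFamily (X : Type*) extends CatBase X where
  desc : ∀ f : ℕ → Set X, (∀ n, f n ∈ regions) → (∀ n, f (n+1) ⊆ f n) →
    (⋂ n, f n).Nonempty
  remove : ∀ A ∈ regions, ∀ x : X, ∃ B ∈ regions, B ⊆ A ∧ x ∉ B

namespace CatBase

variable {X : Type*} (cb : CatBase X)

theorem exists_antitone_subregions_disjoint {A : Set X} (hA : A ∈ cb.regions)
    {S : ℕ → Set X} (hS : ∀ n, cb.Singular (S n)) :
    ∃ B : ℕ → Set X, (∀ n, B n ∈ cb.regions) ∧ Antitone B ∧ B 0 ⊆ A ∧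
      ∀ n, Disjoint (B n) (S n) := by
  choose F hF_mem hF_sub hF_disj using hS
  let B : ℕ → cb.regions := fun n =>
    Nat.rec ⟨F 0 A hA, hF_mem 0 A hA⟩ (fun n C => ⟨F (n + 1) C C.2, hF_mem (n + 1) C C.2⟩) n
  refine ⟨fun n => (B n).1, fun n => (B n).2, antitone_nat_of_succ_le fun n => ?_, ?_, ?_⟩
  · exact hF_sub (n + 1) (B n).1 (B n).2
  · exact hF_sub 0 A hA
  · rintro (_ | n)
    · exact hF_disj 0 A hA
    · exact hF_disj (n + 1) (B n).1 (B n).2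

theorem abundant_of_iInter_nonempty
    (hdesc : ∀ B : ℕ → Set X, (∀ n, B n ∈ cb.regions) → (∀ n, B (n + 1) ⊆ B n) →
      (⋂ n, B n).Nonempty)
    {A : Set X} (hA : A ∈ cb.regions) : cb.Abundant A := by
  rintro ⟨S, hS, rfl⟩
  obtain ⟨B, hB_mem, hB_anti, hB_sub, hB_disj⟩ := cb.exists_antitone_subregions_disjoint hA hS
  obtain ⟨x, hx⟩ := hdesc B hB_mem fun n => hB_anti n.le_succ
  rw [Set.mem_iInter] at hx
  obtain ⟨n, hxS⟩ := Set.mem_iUnion.1 (hB_sub (hx 0))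
  exact Set.disjoint_left.1 (hB_disj n) (hx n) hxS

end CatBase

theorem stmt15 {X : Type*} (mf : MFamily X) :
    ∀ A ∈ mf.regions, mf.toCatBase.Abundant A :=
  fun _ hA => mf.toCatBase.abundant_of_iInter_nonempty mf.desc hA
end

section
/- Suppose (X, C) is a point-meager Baire base satisfying the countable chain condition in which every region has cardinality ℵ₁, and suppose S ⊆ X is non-Baire with test region D, and suppose S and X − S admit decompositions into ℵ₁ many pairwise disjoint pieces {S_α}_{α<Ω} and {T_α}_{α<Ω} such that each S_α is abundant in every region in which S is abundant and each T_α is abundant in every region in which X − S is abundant. Then {S_α : α < Ω} ∪ {T_α : α < Ω} is a uniform non-Baire family (each member is non-Baire with D as a common test region) that partitions X. -/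
/-! Each piece `S_α` inherits abundance from `S` in every subregion of `D`, while its complement
contains `X − S`, which is abundant there as well; so `D` remains a test region for `S_α`, and
symmetrically (replacing `S` by `X − S`) for `T_α`. -/

namespace CatBase

variable {X : Type*} (cb : CatBase X)

def IsTestRegion (A D : Set X) : Prop :=
  D ∈ cb.regions ∧ ∀ E ∈ cb.regions, E ⊆ D → cb.Abundant (A ∩ E) ∧ cb.Abundant (Aᶜ ∩ E)

variable {cb}

theorem Meager.mono {A B : Set X} (h : A ⊆ B) (hB : cb.Meager B) : cb.Meager A := by
  obtain ⟨f, hf, rfl⟩ := hB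
  refine ⟨fun n => f n ∩ A, fun n R hR => ?_, ?_⟩
  · obtain ⟨B', hB', hsub, hdisj⟩ := hf n R hR
    exact ⟨B', hB', hsub, hdisj.mono_right Set.inter_subset_left⟩
  · rw [← Set.iUnion_inter, Set.inter_eq_right.mpr h]

theorem Abundant.mono {A B : Set X} (h : A ⊆ B) (hA : cb.Abundant A) : cb.Abundant B :=
  fun hB => hA (hB.mono h)

namespace IsTestRegion

variable {A D : Set X}

theorem compl (hAD : cb.IsTestRegion A D) : cb.IsTestRegion Aᶜ D := by
  refine ⟨hAD.1, fun E hE hED => ?_⟩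
  rw [compl_compl]
  exact (hAD.2 E hE hED).symm

theorem not_baire (hAD : cb.IsTestRegion A D) : ¬ cb.Baire A := fun hA => by
  obtain ⟨B, hB, hBD, hmeager⟩ := hA D hAD.1
  obtain ⟨hAB, hAcB⟩ := hAD.2 B hB hBD
  exact hmeager.elim hAB hAcB

theorem of_subset {P : Set X} (hAD : cb.IsTestRegion A D) (hPA : P ⊆ A)
    (hP : ∀ E ∈ cb.regions, cb.Abundant (A ∩ E) → cb.Abundant (P ∩ E)) :
    cb.IsTestRegion P D := by
  refine ⟨hAD.1, fun E hE hED => ?_⟩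
  obtain ⟨hAE, hAcE⟩ := hAD.2 E hE hED
  exact ⟨hP E hE hAE, hAcE.mono (Set.inter_subset_inter_left E (Set.compl_subset_compl.mpr hPA))⟩

end IsTestRegion

end CatBase

theorem stmt16_general {X : Type*} (cb : CatBase X)
    {S D : Set X} (hD : D ∈ cb.regions)
    (htest : ∀ E ∈ cb.regions, E ⊆ D → cb.Abundant (S ∩ E) ∧ cb.Abundant (Sᶜ ∩ E))
    (Sf Tf : {α : Ordinal // α < (Cardinal.aleph 1).ord} → Set X)
    (hSun : ⋃ α, Sf α = S) (hTun : ⋃ α, Tf α = Sᶜ)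
    (hSab : ∀ α, ∀ E ∈ cb.regions, cb.Abundant (S ∩ E) → cb.Abundant (Sf α ∩ E))
    (hTab : ∀ α, ∀ E ∈ cb.regions, cb.Abundant (Sᶜ ∩ E) → cb.Abundant (Tf α ∩ E)) :
    (∀ α, ¬ cb.Baire (Sf α) ∧ ¬ cb.Baire (Tf α)) ∧
    (∀ α, ∀ E ∈ cb.regions, E ⊆ D →
      cb.Abundant (Sf α ∩ E) ∧ cb.Abundant ((Sf α)ᶜ ∩ E) ∧
      cb.Abundant (Tf α ∩ E) ∧ cb.Abundant ((Tf α)ᶜ ∩ E)) ∧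
    ((⋃ α, Sf α) ∪ (⋃ α, Tf α) = Set.univ) := by
  have hSD : cb.IsTestRegion S D := ⟨hD, htest⟩
  have hSfD α : cb.IsTestRegion (Sf α) D :=
    hSD.of_subset (hSun ▸ Set.subset_iUnion Sf α) (hSab α)
  have hTfD α : cb.IsTestRegion (Tf α) D :=
    hSD.compl.of_subset (hTun ▸ Set.subset_iUnion Tf α) (hTab α)
  refine ⟨fun α => ⟨(hSfD α).not_baire, (hTfD α).not_baire⟩, fun α E hE hED => ?_, ?_⟩
  · obtain ⟨hSfE, hSfcE⟩ := (hSfD α).2 E hE hED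
    obtain ⟨hTfE, hTfcE⟩ := (hTfD α).2 E hE hED
    exact ⟨hSfE, hSfcE, hTfE, hTfcE⟩
  · rw [hSun, hTun, Set.union_compl_self]

theorem stmt16 {X : Type*} (cb : CatBase X)
    (hpm : ∀ S : Set X, S.Countable → cb.Meager S)
    (hbb : ∀ A ∈ cb.regions, cb.Abundant A)
    (hccc : ∀ D : Set (Set X), D ⊆ cb.regions → D.Pairwise Disjoint → D.Countable)
    (hcard : ∀ A ∈ cb.regions, Cardinal.mk A = Cardinal.aleph 1)
    {S D : Set X} (hSnb : ¬ cb.Baire S) (hD : D ∈ cb.regions)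
    (htest : ∀ E ∈ cb.regions, E ⊆ D → cb.Abundant (S ∩ E) ∧ cb.Abundant (Sᶜ ∩ E))
    (Sf Tf : {α : Ordinal // α < (Cardinal.aleph 1).ord} → Set X)
    (hSdisj : Pairwise (Function.onFun Disjoint Sf))
    (hTdisj : Pairwise (Function.onFun Disjoint Tf))
    (hSun : ⋃ α, Sf α = S) (hTun : ⋃ α, Tf α = Sᶜ)
    (hSab : ∀ α, ∀ E ∈ cb.regions, cb.Abundant (S ∩ E) → cb.Abundant (Sf α ∩ E))
    (hTab : ∀ α, ∀ E ∈ cb.regions, cb.Abundant (Sᶜ ∩ E) → cb.Abundant (Tf α ∩ E)) :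
    (∀ α, ¬ cb.Baire (Sf α) ∧ ¬ cb.Baire (Tf α)) ∧
    (∀ α, ∀ E ∈ cb.regions, E ⊆ D →
      cb.Abundant (Sf α ∩ E) ∧ cb.Abundant ((Sf α)ᶜ ∩ E) ∧
      cb.Abundant (Tf α ∩ E) ∧ cb.Abundant ((Tf α)ᶜ ∩ E)) ∧
    ((⋃ α, Sf α) ∪ (⋃ α, Tf α) = Set.univ) :=
  stmt16_general cb hD htest Sf Tf hSun hTun hSab hTab
end
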